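/- Let Φ₁(z,X) be a Jacobi-like form of weight λ₁ for Γ (scalar coefficients) and Φ̂₂(z,X) a vector-valued Jacobi-like form of weight λ₂ with respect to ρ. Then the product Ψ(z,X) = Φ₁(z,−X)·Φ̂₂(z,X) satisfies Ψ(γz, 𝔍(γ,z)^{−2}X) = 𝔍(γ,z)^{λ₁+λ₂} ρ(γ) Ψ(z,X) for all γ ∈ Γ; consequently every coefficient ψ_r of Ψ(z,X) = Σ_r ψ_r(z)X^r is a vector-valued modular form of weight λ₁+λ₂+2r with respect to ρ. -/

import Mathlib

open Matrix Complex Finset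

abbrev SL2R := Matrix.SpecialLinearGroup (Fin 2) ℝ

noncomputable def Jf (γ : SL2R) (z : ℂ) : ℂ := (γ.1 1 0 : ℝ) * z + (γ.1 1 1 : ℝ)

noncomputable def Kf (γ : SL2R) (z : ℂ) : ℂ := (γ.1 1 0 : ℝ) / Jf γ z

noncomputable def actSL (γ : SL2R) (z : ℂ) : ℂ :=
  ((γ.1 0 0 : ℝ) * z + (γ.1 0 1 : ℝ)) / Jf γ z

/-!
Read as formal power series in `X`, the transformation law of a Jacobi-like form says
`Φ(γz, J⁻²X) = J^λ e^{KX} Φ(z, X)`. Substituting `X ↦ -X` in the scalar factor turns `e^{KX}`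
into `e^{-KX}`, which cancels the `e^{KX}` of the vector-valued factor, so
`Ψ(γz, J⁻²X) = J^{λ₁+λ₂} ρ(γ) Ψ(z, X)`; the coefficient of `X^r` then picks up `J^{2r}`.
The vector-valued factor is treated one coordinate at a time, after moving `ρ(γ)` inside the sum.
-/

lemma Jf_ne_zero (γ : SL2R) {z : ℂ} (hz : 0 < z.im) : Jf γ z ≠ 0 := by
  intro h
  have hc : γ.1 1 0 = 0 := by
    simpa [Jf, hz.ne'] using congrArg Complex.im h
  have hd : γ.1 1 1 = 0 := by
    simpa [Jf, hc] using h
  have hdet := γ.2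
  rw [Matrix.det_fin_two, hc, hd] at hdet
  simp at hdet

section

variable {𝕜 : Type*} [Field 𝕜] [CharZero 𝕜]

namespace PowerSeries

lemma rescale_C {R : Type*} [CommSemiring R] (a c : R) : rescale a (C c) = C c := by
  ext n
  cases n <;> simp [coeff_C]

lemma rescale_neg_exp_mul_rescale_exp (K : 𝕜) :
    rescale (-K) (exp 𝕜) * rescale K (exp 𝕜) = 1 := by
  rw [exp_mul_exp_eq_exp_add, neg_add_cancel, rescale_zero_apply, constantCoeff_exp, map_one]

lemma rescale_mk_eq_of_coeff {J K : 𝕜} {l : ℤ} {f g : ℕ → 𝕜}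
    (h : ∀ m : ℕ, J ^ (-(2 * m : ℤ)) * f m =
      J ^ l * ∑ j ∈ range (m + 1), K ^ (m - j) / ((m - j).factorial : 𝕜) * g j) :
    rescale (J ^ (-2 : ℤ)) (mk f) = C (J ^ l) * (rescale K (exp 𝕜) * mk g) := by
  ext m
  rw [coeff_rescale, coeff_mk, coeff_C_mul, coeff_mul, Nat.sum_antidiagonal_eq_sum_range_succ_mk,
    ← zpow_natCast, ← _root_.zpow_mul, show (-2 : ℤ) * m = -(2 * m) by ring, h m,
    ← sum_range_reflect]
  congr 1
  refine sum_congr rfl fun j hj => ?_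
  have hjm : j ≤ m := Nat.lt_succ_iff.mp (mem_range.mp hj)
  simp only [Nat.add_sub_cancel, Nat.sub_sub_self hjm, coeff_rescale, coeff_exp, coeff_mk]
  push_cast
  ring

lemma rescale_neg_one_mul_eq {a K u v : 𝕜} {F F' G G' : 𝕜⟦X⟧}
    (hF : rescale a F' = C u * (rescale K (exp 𝕜) * F))
    (hG : rescale a G' = C v * (rescale K (exp 𝕜) * G)) :
    rescale a (rescale (-1) F' * G') = C (u * v) * (rescale (-1) F * G) := by
  have hF' : rescale a (rescale (-1) F') = C u * (rescale (-K) (exp 𝕜) * rescale (-1) F) := by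
    rw [rescale_rescale, mul_comm, ← rescale_rescale, hF, map_mul, map_mul, rescale_C,
      rescale_rescale, mul_neg_one]
  rw [map_mul, hF', hG, map_mul]
  linear_combination (C u * C v * rescale (-1) F * G) * rescale_neg_exp_mul_rescale_exp K

lemma coeff_rescale_neg_one_mul {R : Type*} [CommRing R] (f g : ℕ → R) (r : ℕ) :
    coeff r (rescale (-1) (mk f) * mk g) =
      ∑ s ∈ range (r + 1), (-1) ^ s * f s * g (r - s) := by
  simp only [coeff_mul, Nat.sum_antidiagonal_eq_sum_range_succ_mk, coeff_rescale, coeff_mk]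

end PowerSeries

open PowerSeries in
lemma sum_alternating_mul_eq_of_jacobi_like {J K : 𝕜} (hJ : J ≠ 0) {l₁ l₂ : ℤ}
    {f f' g g' : ℕ → 𝕜}
    (hf : ∀ m : ℕ, J ^ (-(2 * m : ℤ)) * f' m =
      J ^ l₁ * ∑ j ∈ range (m + 1), K ^ (m - j) / ((m - j).factorial : 𝕜) * f j)
    (hg : ∀ m : ℕ, J ^ (-(2 * m : ℤ)) * g' m =
      J ^ l₂ * ∑ j ∈ range (m + 1), K ^ (m - j) / ((m - j).factorial : 𝕜) * g j) (r : ℕ) :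
    ∑ s ∈ range (r + 1), (-1) ^ s * f' s * g' (r - s) =
      J ^ (l₁ + l₂ + 2 * r) * ∑ s ∈ range (r + 1), (-1) ^ s * f s * g (r - s) := by
  have hcoeff := congrArg (coeff r)
    (rescale_neg_one_mul_eq (rescale_mk_eq_of_coeff hf) (rescale_mk_eq_of_coeff hg))
  rw [coeff_rescale, coeff_C_mul, coeff_rescale_neg_one_mul, coeff_rescale_neg_one_mul,
    ← zpow_natCast, ← _root_.zpow_mul] at hcoeff
  rw [zpow_add₀ hJ, zpow_add₀ hJ, mul_right_comm, ← hcoeff, mul_right_comm, ← zpow_add₀ hJ,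
    show (-2 * r + 2 * r : ℤ) = 0 by ring, zpow_zero, one_mul]

end

theorem jacobi_like_product_coefficients_general (N : ℕ) (Γ : Subgroup SL2R)
    (ρ : SL2R → Matrix (Fin (N + 1)) (Fin (N + 1)) ℂ)
    (l₁ l₂ : ℤ) (φ : ℕ → ℂ → ℂ) (ψ : ℕ → ℂ → Fin (N + 1) → ℂ)
    -- Φ₁(z,X) = Σ_i φ_i(z) X^i is a Jacobi-like form of weight λ₁ (coefficientwise):
    (hΦ₁ : ∀ γ ∈ Γ, ∀ z : ℂ, 0 < z.im → ∀ m : ℕ,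
      Jf γ z ^ (-(2 * m : ℤ)) * φ m (actSL γ z) =
        Jf γ z ^ l₁ * ∑ j ∈ Finset.range (m + 1),
          Kf γ z ^ (m - j) / ((m - j).factorial : ℂ) * φ j z)
    -- Φ̂₂(z,X) = Σ_i ψ_i(z) X^i is a vector-valued Jacobi-like form of weight λ₂ w.r.t. ρ:
    (hΦ₂ : ∀ γ ∈ Γ, ∀ z : ℂ, 0 < z.im → ∀ m : ℕ,
      Jf γ z ^ (-(2 * m : ℤ)) • ψ m (actSL γ z) =
        Jf γ z ^ l₂ • ∑ j ∈ Finset.range (m + 1),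
          (Kf γ z ^ (m - j) / ((m - j).factorial : ℂ)) • (ρ γ *ᵥ ψ j z)) :
    -- then each coefficient ψΨ_r = Σ_{i+j=r} (−1)^i φ_i ψ_j of Ψ(z,X) = Φ₁(z,−X)Φ̂₂(z,X)
    -- is a vector-valued modular form of weight λ₁+λ₂+2r with respect to ρ:
    ∀ r : ℕ, ∀ γ ∈ Γ, ∀ z : ℂ, 0 < z.im →
      (fun i => ∑ s ∈ Finset.range (r + 1), (-1 : ℂ) ^ s * φ s (actSL γ z) *
          ψ (r - s) (actSL γ z) i) =
        Jf γ z ^ (l₁ + l₂ + 2 * r) •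
          (ρ γ *ᵥ fun i => ∑ s ∈ Finset.range (r + 1), (-1 : ℂ) ^ s * φ s z * ψ (r - s) z i) := by
  intro r γ hγ z hz
  have hψ : ∀ i (m : ℕ), Jf γ z ^ (-(2 * m : ℤ)) * ψ m (actSL γ z) i =
      Jf γ z ^ l₂ * ∑ j ∈ range (m + 1),
        Kf γ z ^ (m - j) / ((m - j).factorial : ℂ) * (ρ γ *ᵥ ψ j z) i := fun i m => by
    simpa [Finset.sum_apply] using congrFun (hΦ₂ γ hγ z hz m) i
  have hρ : (ρ γ *ᵥ fun i => ∑ s ∈ range (r + 1), (-1 : ℂ) ^ s * φ s z * ψ (r - s) z i) =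
      fun i => ∑ s ∈ range (r + 1), (-1 : ℂ) ^ s * φ s z * (ρ γ *ᵥ ψ (r - s) z) i := by
    have hsum : (fun i => ∑ s ∈ range (r + 1), (-1 : ℂ) ^ s * φ s z * ψ (r - s) z i) =
        ∑ s ∈ range (r + 1), ((-1 : ℂ) ^ s * φ s z) • ψ (r - s) z := by
      ext i
      simp [Finset.sum_apply]
    ext i
    simp [hsum, mulVec_sum, mulVec_smul, Finset.sum_apply]
  ext i
  rw [hρ, Pi.smul_apply, smul_eq_mul]
  exact sum_alternating_mul_eq_of_jacobi_like (Jf_ne_zero γ hz) (hΦ₁ γ hγ z hz) (hψ i) r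

/-- Product of a scalar Jacobi-like form of weight λ₁ (with X ↦ −X) and a
vector-valued Jacobi-like form of weight λ₂ w.r.t. ρ: every coefficient ψ_r of
Ψ(z,X) = Φ₁(z,−X)·Φ̂₂(z,X) = Σ_r ψ_r(z) X^r is a vector-valued modular form of
weight λ₁+λ₂+2r with respect to ρ.  Jacobi-like forms are encoded
coefficientwise: Φ(γz, 𝔍^{−2}X) = 𝔍^λ e^{𝔎X} (ρ(γ)) Φ(z,X). -/
theorem jacobi_like_product_coefficients (N : ℕ) (Γ : Subgroup SL2R)
    (ρ : SL2R → Matrix (Fin (N + 1)) (Fin (N + 1)) ℂ)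
    (l₁ l₂ : ℤ) (φ : ℕ → ℂ → ℂ) (ψ : ℕ → ℂ → Fin (N + 1) → ℂ)
    (hφd : ∀ i, DifferentiableOn ℂ (φ i) {z : ℂ | 0 < z.im})
    (hψd : ∀ i, DifferentiableOn ℂ (ψ i) {z : ℂ | 0 < z.im})
    -- Φ₁(z,X) = Σ_i φ_i(z) X^i is a Jacobi-like form of weight λ₁ (coefficientwise):
    (hΦ₁ : ∀ γ ∈ Γ, ∀ z : ℂ, 0 < z.im → ∀ m : ℕ,
      Jf γ z ^ (-(2 * m : ℤ)) * φ m (actSL γ z) =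
        Jf γ z ^ l₁ * ∑ j ∈ Finset.range (m + 1),
          Kf γ z ^ (m - j) / ((m - j).factorial : ℂ) * φ j z)
    -- Φ̂₂(z,X) = Σ_i ψ_i(z) X^i is a vector-valued Jacobi-like form of weight λ₂ w.r.t. ρ:
    (hΦ₂ : ∀ γ ∈ Γ, ∀ z : ℂ, 0 < z.im → ∀ m : ℕ,
      Jf γ z ^ (-(2 * m : ℤ)) • ψ m (actSL γ z) =
        Jf γ z ^ l₂ • ∑ j ∈ Finset.range (m + 1),
          (Kf γ z ^ (m - j) / ((m - j).factorial : ℂ)) • (ρ γ *ᵥ ψ j z)) :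
    -- then each coefficient ψΨ_r = Σ_{i+j=r} (−1)^i φ_i ψ_j of Ψ(z,X) = Φ₁(z,−X)Φ̂₂(z,X)
    -- is a vector-valued modular form of weight λ₁+λ₂+2r with respect to ρ:
    ∀ r : ℕ, ∀ γ ∈ Γ, ∀ z : ℂ, 0 < z.im →
      (fun i => ∑ s ∈ Finset.range (r + 1), (-1 : ℂ) ^ s * φ s (actSL γ z) *
          ψ (r - s) (actSL γ z) i) =
        Jf γ z ^ (l₁ + l₂ + 2 * r) •
          (ρ γ *ᵥ fun i => ∑ s ∈ Finset.range (r + 1), (-1 : ℂ) ^ s * φ s z * ψ (r - s) z i) :=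
  jacobi_like_product_coefficients_general N Γ ρ l₁ l₂ φ ψ hΦ₁ hΦ₂
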